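/- arXiv:1711.04257 — 5 statements merged into one kernel-verified Lean document; each statement's English description precedes it below -/
import Mathlib

section
/- Let k ≥ 1 be a fixed integer. There exists a function f_k : ℕ₊ × ℕ₊ → ℤ such that: (i) f_k(m₁n₁, m₂n₂) = f_k(m₁,m₂)·f_k(n₁,n₂) whenever gcd(m₁m₂, n₁n₂) = 1; (ii) for every prime p and exponents ν₁, ν₂ ≥ 0, f_k(p^{ν₁}, p^{ν₂}) equals 1 if ν₁ = ν₂ = 0 or if ν₁, ν₂ ≥ 1 and ν₁+ν₂ = k, equals −1 if ν₁, ν₂ ≥ 1 and ν₁+ν₂ = k+1, and equals 0 otherwise; (iii) for all positive integers n₁, n₂, τ_{1,k}(n₁n₂) = Σ_{d₁ ∣ n₁, d₂ ∣ n₂} f_k(d₁,d₂) · τ_{1,k}(n₁/d₁) · τ_{1,k}(n₂/d₂). -/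
/-!
Both sides of the identity are multiplicative functions of the pair `(n₁, n₂)`:
`τ_{1,k} = ζ * 1_{k-th powers}` is multiplicative, and the divisor convolution of two multiplicative
functions of two variables is again one. So it suffices to compare them at `(p ^ a, p ^ b)`, where
`τ_{1,k}(p ^ m) = ⌊m/k⌋ + 1`. Writing `⌊m/k⌋ + 1` as the number of `s` with `s k ≤ m` and exchanging
the sums turns the right side into `∑_{s ≤ a/k, t ≤ b/k} G(a - s k, b - t k)`, where
`G(A, B) = [A < k] + [B < k] - [A + B < k]` is the sum of `f_k(p ^ i, p ^ j)` over `i ≤ A, j ≤ B`.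
Only `s = ⌊a/k⌋` or `t = ⌊b/k⌋` contribute, and the sum is
`⌊a/k⌋ + ⌊b/k⌋ + 2 - [a % k + b % k < k] = ⌊(a + b)/k⌋ + 1`.
-/

open scoped BigOperators

/-- `tau1k k n` = τ_{1,k}(n), the number of positive integers `b` with `b ^ k ∣ n`
(equivalently, the number of pairs `(a, b)` of positive integers with `a * b ^ k = n`). -/
def tau1k (k n : ℕ) : ℕ := (n.divisors.filter fun b => b ^ k ∣ n).card

namespace BuscheRamanujan

open Finset ArithmeticFunction
open scoped ArithmeticFunction.zeta

section Multiplicative₂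

variable {R : Type*}

def IsMultiplicative₂ [MulOneClass R] (h : ℕ → ℕ → R) : Prop :=
  h 1 1 = 1 ∧ ∀ {m₁ m₂ n₁ n₂ : ℕ}, Nat.Coprime (m₁ * m₂) (n₁ * n₂) →
    h (m₁ * n₁) (m₂ * n₂) = h m₁ m₂ * h n₁ n₂

theorem IsMultiplicative₂.eq_of_prime_pow [MulOneClass R] {h h' : ℕ → ℕ → R}
    (hh : IsMultiplicative₂ h) (hh' : IsMultiplicative₂ h')
    (heq : ∀ p a b, p.Prime → h (p ^ a) (p ^ b) = h' (p ^ a) (p ^ b))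
    {n₁ n₂ : ℕ} (hn₁ : n₁ ≠ 0) (hn₂ : n₂ ≠ 0) : h n₁ n₂ = h' n₁ n₂ := by
  induction hN : n₁ * n₂ using Nat.strong_induction_on generalizing n₁ n₂ with
  | _ N ih =>
  by_cases hone : n₁ * n₂ = 1
  · obtain ⟨rfl, rfl⟩ := mul_eq_one.1 hone
    rw [hh.1, hh'.1]
  obtain ⟨p, hp, hpn⟩ := Nat.exists_prime_and_dvd hone
  have hpm : ¬ p ∣ ordCompl[p] n₁ * ordCompl[p] n₂ := fun h =>
    (hp.dvd_mul.1 h).elim (Nat.not_dvd_ordCompl hp hn₁) (Nat.not_dvd_ordCompl hp hn₂)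
  have hcop : Nat.Coprime (p ^ n₁.factorization p * p ^ n₂.factorization p)
      (ordCompl[p] n₁ * ordCompl[p] n₂) := by
    rw [← pow_add]
    exact ((hp.coprime_iff_not_dvd).2 hpm).pow_left _
  have hsplit : ∀ h : ℕ → ℕ → R, IsMultiplicative₂ h → h n₁ n₂ =
      h (p ^ n₁.factorization p) (p ^ n₂.factorization p) * h (ordCompl[p] n₁) (ordCompl[p] n₂) :=
    fun h hh => by
      conv_lhs => rw [← Nat.ordProj_mul_ordCompl_eq_self n₁ p,
        ← Nat.ordProj_mul_ordCompl_eq_self n₂ p]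
      exact hh.2 hcop
  have hlt : ordCompl[p] n₁ * ordCompl[p] n₂ < N := by
    rw [← hN]
    refine lt_of_le_of_ne (Nat.le_of_dvd (by positivity) ?_) fun h => hpm (h ▸ hpn)
    exact mul_dvd_mul (Nat.ordCompl_dvd n₁ p) (Nat.ordCompl_dvd n₂ p)
  rw [hsplit h hh, hsplit h' hh', heq p _ _ hp,
    ih _ hlt (Nat.ordCompl_pos p hn₁).ne' (Nat.ordCompl_pos p hn₂).ne' rfl]

theorem _root_.ArithmeticFunction.IsMultiplicative.isMultiplicative₂_comp_mul [MonoidWithZero R]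
    {f : ArithmeticFunction R} (hf : f.IsMultiplicative) :
    IsMultiplicative₂ fun n₁ n₂ => f (n₁ * n₂) := by
  refine ⟨by simpa using hf.map_one, fun {m₁ m₂ n₁ n₂} hmn => ?_⟩
  beta_reduce
  rw [show m₁ * n₁ * (m₂ * n₂) = m₁ * m₂ * (n₁ * n₂) by ring]
  exact hf.map_mul_of_coprime hmn

theorem _root_.ArithmeticFunction.IsMultiplicative.isMultiplicative₂_mul [CommMonoidWithZero R]
    {f : ArithmeticFunction R} (hf : f.IsMultiplicative) :
    IsMultiplicative₂ fun n₁ n₂ => f n₁ * f n₂ := by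
  refine ⟨by simp [hf.map_one], fun {m₁ m₂ n₁ n₂} hmn => ?_⟩
  beta_reduce
  rw [hf.map_mul_of_coprime hmn.coprime_mul_right.coprime_mul_right_right,
    hf.map_mul_of_coprime hmn.coprime_mul_left.coprime_mul_left_right]
  exact mul_mul_mul_comm _ _ _ _

def ofPrimePowers [CommMonoid R] (c : ℕ → ℕ → R) (n₁ n₂ : ℕ) : R :=
  ∏ p ∈ (n₁ * n₂).primeFactors, c (n₁.factorization p) (n₂.factorization p)

lemma factorization_mul_apply_of_not_dvd {a b p : ℕ} (hab : a.Coprime b) (hp : ¬ p ∣ b) :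
    (a * b).factorization p = a.factorization p := by
  rw [Nat.factorization_mul_apply_of_coprime hab, Nat.factorization_eq_zero_of_not_dvd hp,
    add_zero]

theorem isMultiplicative₂_ofPrimePowers [CommMonoid R] (c : ℕ → ℕ → R) :
    IsMultiplicative₂ (ofPrimePowers c) := by
  refine ⟨by simp [ofPrimePowers], fun {m₁ m₂ n₁ n₂} hmn => ?_⟩
  have h₁ : m₁.Coprime n₁ := hmn.coprime_mul_right.coprime_mul_right_right
  have h₂ : m₂.Coprime n₂ := hmn.coprime_mul_left.coprime_mul_left_right
  unfold ofPrimePowers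
  rw [show m₁ * n₁ * (m₂ * n₂) = m₁ * m₂ * (n₁ * n₂) by ring, hmn.primeFactors_mul,
    prod_union hmn.disjoint_primeFactors]
  congr 1 <;> refine prod_congr rfl fun p hp => ?_
  · have hpn : ¬ p ∣ n₁ * n₂ := (Nat.prime_of_mem_primeFactors hp).coprime_iff_not_dvd.1
      (hmn.coprime_dvd_left (Nat.dvd_of_mem_primeFactors hp))
    rw [factorization_mul_apply_of_not_dvd h₁ fun h => hpn (h.mul_right _),
      factorization_mul_apply_of_not_dvd h₂ fun h => hpn (h.mul_left _)]
  · have hpm : ¬ p ∣ m₁ * m₂ := (Nat.prime_of_mem_primeFactors hp).coprime_iff_not_dvd.1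
      (hmn.symm.coprime_dvd_left (Nat.dvd_of_mem_primeFactors hp))
    rw [mul_comm m₁, mul_comm m₂,
      factorization_mul_apply_of_not_dvd h₁.symm fun h => hpm (h.mul_right _),
      factorization_mul_apply_of_not_dvd h₂.symm fun h => hpm (h.mul_left _)]

theorem ofPrimePowers_prime_pow [CommMonoid R] {c : ℕ → ℕ → R} (hc : c 0 0 = 1) {p : ℕ}
    (hp : p.Prime) (a b : ℕ) : ofPrimePowers c (p ^ a) (p ^ b) = c a b := by
  rcases Nat.eq_zero_or_pos (a + b) with hab | hab
  · obtain ⟨rfl, rfl⟩ : a = 0 ∧ b = 0 := by omega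
    simp [ofPrimePowers, hc]
  rw [ofPrimePowers, ← pow_add, Nat.primeFactors_prime_pow hab.ne' hp, prod_singleton,
    hp.factorization_pow, hp.factorization_pow, Finsupp.single_eq_same, Finsupp.single_eq_same]

lemma sum_divisors_mul_of_coprime [AddCommMonoid R] {m n : ℕ} (hmn : m.Coprime n) (φ : ℕ → R) :
    ∑ d ∈ (m * n).divisors, φ d = ∑ e ∈ m.divisors, ∑ c ∈ n.divisors, φ (e * c) := by
  rw [hmn.divisors_mul, sum_map]
  exact (sum_attach _ fun x => φ (x.1 * x.2)).trans (sum_product _ _ _)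

def divisorConv [Semiring R] (f g : ℕ → ℕ → R) (n₁ n₂ : ℕ) : R :=
  ∑ d₁ ∈ n₁.divisors, ∑ d₂ ∈ n₂.divisors, f d₁ d₂ * g (n₁ / d₁) (n₂ / d₂)

theorem IsMultiplicative₂.divisorConv [CommSemiring R] {f g : ℕ → ℕ → R}
    (hf : IsMultiplicative₂ f) (hg : IsMultiplicative₂ g) :
    IsMultiplicative₂ (divisorConv f g) := by
  refine ⟨by simp [BuscheRamanujan.divisorConv, hf.1, hg.1], fun {m₁ m₂ n₁ n₂} hmn => ?_⟩
  simp only [BuscheRamanujan.divisorConv,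
    sum_divisors_mul_of_coprime hmn.coprime_mul_right.coprime_mul_right_right,
    sum_divisors_mul_of_coprime hmn.coprime_mul_left.coprime_mul_left_right, sum_mul_sum]
  refine sum_congr rfl fun e₁ he₁ => sum_congr rfl fun c₁ hc₁ =>
    sum_congr rfl fun e₂ he₂ => sum_congr rfl fun c₂ hc₂ => ?_
  rw [Nat.mem_divisors] at he₁ hc₁ he₂ hc₂
  rw [← Nat.div_mul_div_comm he₁.1 hc₁.1, ← Nat.div_mul_div_comm he₂.1 hc₂.1,
    hf.2 ((hmn.coprime_dvd_left (mul_dvd_mul he₁.1 he₂.1)).coprime_dvd_right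
      (mul_dvd_mul hc₁.1 hc₂.1)),
    hg.2 ((hmn.coprime_dvd_left (mul_dvd_mul (Nat.div_dvd_of_dvd he₁.1)
      (Nat.div_dvd_of_dvd he₂.1))).coprime_dvd_right
        (mul_dvd_mul (Nat.div_dvd_of_dvd hc₁.1) (Nat.div_dvd_of_dvd hc₂.1)))]
  ring

end Multiplicative₂

def powIndicator (k : ℕ) : ArithmeticFunction ℕ :=
  ⟨fun n => if n ≠ 0 ∧ ∃ b, b ^ k = n then 1 else 0, by simp⟩

lemma powIndicator_apply (k n : ℕ) :
    powIndicator k n = if n ≠ 0 ∧ ∃ b, b ^ k = n then 1 else 0 := rfl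

lemma exists_pow_eq_mul_iff {k m n : ℕ} (hmn : m.Coprime n) :
    (∃ c, c ^ k = m * n) ↔ (∃ a, a ^ k = m) ∧ ∃ b, b ^ k = n := by
  refine ⟨fun ⟨c, hc⟩ => ?_, fun ⟨⟨a, ha⟩, ⟨b, hb⟩⟩ => ⟨a * b, by rw [mul_pow, ha, hb]⟩⟩
  obtain ⟨a, ha⟩ := exists_eq_pow_of_mul_eq_pow (Nat.isUnit_iff.2 hmn) hc.symm
  obtain ⟨b, hb⟩ := exists_eq_pow_of_mul_eq_pow (Nat.isUnit_iff.2 hmn.symm)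
    ((mul_comm n m).trans hc.symm)
  exact ⟨⟨a, ha.symm⟩, ⟨b, hb.symm⟩⟩

lemma isMultiplicative_powIndicator (k : ℕ) : (powIndicator k).IsMultiplicative := by
  refine ⟨by simp [powIndicator_apply], fun {m n} hmn => ?_⟩
  simp only [powIndicator_apply, mul_ne_zero_iff, exists_pow_eq_mul_iff hmn]
  split_ifs <;> tauto

lemma tau1k_eq_zeta_mul_powIndicator {k : ℕ} (hk : k ≠ 0) (n : ℕ) :
    tau1k k n = (ζ * powIndicator k) n := by
  rw [zeta_mul_apply, tau1k]
  simp only [powIndicator_apply, sum_boole, Nat.cast_id]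
  refine card_nbij (· ^ k) (fun b hb => ?_) (fun b _ c _ h => Nat.pow_left_injective hk h)
    fun d hd => ?_
  · simp only [coe_filter, Set.mem_ofPred_eq, Nat.mem_divisors] at hb ⊢
    exact ⟨⟨hb.2, hb.1.2⟩, pow_ne_zero k (ne_zero_of_dvd_ne_zero hb.1.2 hb.1.1), b, rfl⟩
  · simp only [coe_filter, Set.mem_ofPred_eq, Nat.mem_divisors] at hd
    obtain ⟨⟨hdn, hn⟩, -, b, rfl⟩ := hd
    exact ⟨b, by simpa [hn] using ⟨(dvd_pow_self b hk).trans hdn, hdn⟩, rfl⟩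

lemma tau1k_prime_pow {k p : ℕ} (hk : 0 < k) (hp : p.Prime) (m : ℕ) :
    tau1k k (p ^ m) = m / k + 1 := by
  rw [tau1k, Nat.divisors_prime_pow hp, filter_map, card_map, ← card_range (m / k + 1)]
  congr 1
  ext i
  have : i ≤ m / k ↔ i * k ≤ m := Nat.le_div_iff_mul_le hk
  have := Nat.div_le_self m k
  simp only [mem_filter, mem_range, Function.comp_apply, Function.Embedding.coeFn_mk, ← pow_mul,
    Nat.pow_dvd_pow_iff_le_right hp.one_lt]
  omega

def localCoeff (k i j : ℕ) : ℤ :=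
  if i = 0 ∧ j = 0 then 1
  else if 1 ≤ i ∧ 1 ≤ j ∧ i + j = k then 1
  else if 1 ≤ i ∧ 1 ≤ j ∧ i + j = k + 1 then -1
  else 0

lemma localCoeff_zero_zero (k : ℕ) : localCoeff k 0 0 = 1 := rfl

lemma sum_sum_boole_antidiagonal {a b A B : ℕ} (hA : A ≤ a) (hB : B ≤ b) (n : ℕ) :
    ∑ i ∈ range (a + 1), ∑ j ∈ range (b + 1),
        (if i ≤ A ∧ j ≤ B ∧ 1 ≤ i ∧ 1 ≤ j ∧ i + j = n then 1 else 0 : ℤ)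
      = ((min A (n - 1) + 1 - max 1 (n - B) : ℕ) : ℤ) := by
  have row : ∀ i, ∑ j ∈ range (b + 1),
      (if i ≤ A ∧ j ≤ B ∧ 1 ≤ i ∧ 1 ≤ j ∧ i + j = n then 1 else 0 : ℤ)
        = if i ∈ Icc (max 1 (n - B)) (min A (n - 1)) then 1 else 0 := by
    intro i
    rw [sum_eq_single (n - i) (fun j _ hj => if_neg (by omega)) fun h => by
      rw [mem_range] at h; rw [if_neg (by omega)]]
    congr 1
    simp only [mem_Icc, eq_iff_iff]
    omega
  simp_rw [row]
  rw [sum_boole, Nat.cast_inj, ← Nat.card_Icc]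
  congr 1
  ext i
  simp only [mem_filter, mem_range, mem_Icc]
  omega

lemma sum_sum_localCoeff_box {k a b A B : ℕ} (hk : 0 < k) (hA : A ≤ a) (hB : B ≤ b) :
    ∑ i ∈ range (a + 1), ∑ j ∈ range (b + 1), (if i ≤ A ∧ j ≤ B then localCoeff k i j else 0)
      = (if A < k then 1 else 0) + (if B < k then 1 else 0) - (if A + B < k then 1 else 0) := by
  have split : ∀ i j, (if i ≤ A ∧ j ≤ B then localCoeff k i j else 0)
      = (if i = 0 ∧ j = 0 then 1 else 0)
        + (if i ≤ A ∧ j ≤ B ∧ 1 ≤ i ∧ 1 ≤ j ∧ i + j = k then 1 else 0)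
        - (if i ≤ A ∧ j ≤ B ∧ 1 ≤ i ∧ 1 ≤ j ∧ i + j = k + 1 then 1 else 0) := by
    intro i j
    unfold localCoeff
    split_ifs <;> omega
  simp only [split, sum_add_distrib, sum_sub_distrib, sum_sum_boole_antidiagonal hA hB]
  simp only [ite_and, sum_ite_irrel, sum_ite_eq', mem_range, lt_add_iff_pos_left,
    Order.lt_add_one_iff, zero_le, ↓reduceIte, sum_const_zero, add_tsub_cancel_right]
  split_ifs <;> omega

lemma natCast_div_add_one_eq_sum {k m a : ℕ} (hk : 0 < k) (hm : m ≤ a) :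
    ((m / k + 1 : ℕ) : ℤ) = ∑ s ∈ range (a / k + 1), if s * k ≤ m then 1 else 0 := by
  rw [sum_boole, Nat.cast_inj, ← card_range (m / k + 1)]
  congr 1
  ext s
  have := Nat.le_div_iff_mul_le (x := s) (y := m) hk
  have := Nat.div_le_div_right (c := k) hm
  simp only [mem_range, mem_filter]
  omega

lemma sub_mul_lt_iff_eq_div {k a s : ℕ} (hk : 0 < k) (hs : s ≤ a / k) :
    a - s * k < k ↔ s = a / k := by
  have := Nat.div_add_mod' a k
  have := Nat.mod_lt a hk
  refine ⟨fun h => ?_, fun h => by subst h; omega⟩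
  by_contra hne
  have := Nat.mul_le_mul_right k (show s + 1 ≤ a / k by omega)
  rw [add_mul] at this
  omega

lemma sub_mul_add_sub_mul_lt_iff {k a b s t : ℕ} (hk : 0 < k) (hs : s ≤ a / k) (ht : t ≤ b / k) :
    a - s * k + (b - t * k) < k ↔ s = a / k ∧ t = b / k ∧ a % k + b % k < k := by
  have := Nat.div_add_mod' a k
  have := Nat.div_add_mod' b k
  refine ⟨fun h => ?_, fun ⟨hs, ht, h⟩ => by subst hs ht; omega⟩
  obtain rfl := (sub_mul_lt_iff_eq_div hk hs).1 (by omega)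
  obtain rfl := (sub_mul_lt_iff_eq_div hk ht).1 (by omega)
  omega

theorem sum_sum_localCoeff_mul {k : ℕ} (hk : 0 < k) (a b : ℕ) :
    ∑ i ∈ range (a + 1), ∑ j ∈ range (b + 1),
        localCoeff k i j * ((a - i) / k + 1 : ℕ) * ((b - j) / k + 1 : ℕ)
      = (((a + b) / k + 1 : ℕ) : ℤ) := by
  have mem_range_div {x s : ℕ} (hs : s ∈ range (x / k + 1)) : s ≤ x / k :=
    Nat.lt_succ_iff.1 (mem_range.1 hs)
  calc _ = ∑ i ∈ range (a + 1), ∑ j ∈ range (b + 1), ∑ s ∈ range (a / k + 1),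
        ∑ t ∈ range (b / k + 1),
          if i ≤ a - s * k ∧ j ≤ b - t * k then localCoeff k i j else 0 := by
        refine sum_congr rfl fun i hi => sum_congr rfl fun j hj => ?_
        rw [natCast_div_add_one_eq_sum hk (Nat.sub_le a i),
          natCast_div_add_one_eq_sum hk (Nat.sub_le b j), mul_assoc, sum_mul_sum, mul_sum]
        refine sum_congr rfl fun s hs => (mul_sum _ _ _).trans (sum_congr rfl fun t ht => ?_)
        have := Nat.mul_le_of_le_div k s a (mem_range_div hs)
        have := Nat.mul_le_of_le_div k t b (mem_range_div ht)
        rw [mem_range] at hi hj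
        split_ifs <;> omega
    _ = ∑ s ∈ range (a / k + 1), ∑ t ∈ range (b / k + 1), ∑ i ∈ range (a + 1),
          ∑ j ∈ range (b + 1),
            if i ≤ a - s * k ∧ j ≤ b - t * k then localCoeff k i j else 0 := by
        refine (sum_congr rfl fun i _ => sum_comm).trans ?_
        refine (sum_congr rfl fun i _ => sum_congr rfl fun s _ => sum_comm).trans ?_
        exact sum_comm.trans (sum_congr rfl fun s _ => sum_comm)
    _ = ∑ s ∈ range (a / k + 1), ∑ t ∈ range (b / k + 1),
          ((if s = a / k then 1 else 0) + (if t = b / k then 1 else 0)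
            - (if s = a / k ∧ t = b / k ∧ a % k + b % k < k then 1 else 0)) := by
        refine sum_congr rfl fun s hs => sum_congr rfl fun t ht => ?_
        rw [sum_sum_localCoeff_box hk (Nat.sub_le a _) (Nat.sub_le b _)]
        simp only [sub_mul_lt_iff_eq_div hk (mem_range_div hs),
          sub_mul_lt_iff_eq_div hk (mem_range_div ht),
          sub_mul_add_sub_mul_lt_iff hk (mem_range_div hs) (mem_range_div ht)]
    _ = _ := by
        rw [Nat.add_div hk]
        simp only [ite_and, sum_sub_distrib, sum_add_distrib, sum_ite_irrel, sum_const, card_range,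
          Int.nsmul_eq_mul, Nat.cast_add, Int.natCast_ediv, Nat.cast_one, mul_one, mul_zero,
          sum_ite_eq', mem_range, lt_add_iff_pos_right, Order.lt_one_iff, ↓reduceIte, Nat.cast_ite,
          CharP.cast_eq_zero]
        split_ifs <;> omega

theorem tau1k_prime_pow_mul_eq_divisorConv {k p : ℕ} (hk : 0 < k) (hp : p.Prime) (a b : ℕ) :
    (tau1k k (p ^ a * p ^ b) : ℤ) = divisorConv (ofPrimePowers (localCoeff k))
      (fun m₁ m₂ => (tau1k k m₁ * tau1k k m₂ : ℤ)) (p ^ a) (p ^ b) := by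
  rw [← pow_add, tau1k_prime_pow hk hp, divisorConv, Nat.sum_divisors_prime_pow hp,
    ← sum_sum_localCoeff_mul hk]
  refine sum_congr rfl fun i hi => ?_
  rw [Nat.sum_divisors_prime_pow hp]
  refine sum_congr rfl fun j hj => ?_
  rw [mem_range, Nat.lt_succ_iff] at hi hj
  rw [ofPrimePowers_prime_pow (localCoeff_zero_zero k) hp, Nat.pow_div hi hp.pos,
    Nat.pow_div hj hp.pos, tau1k_prime_pow hk hp, tau1k_prime_pow hk hp, mul_assoc]

theorem tau1k_mul_eq_divisorConv {k : ℕ} (hk : 0 < k) {n₁ n₂ : ℕ} (hn₁ : n₁ ≠ 0) (hn₂ : n₂ ≠ 0) :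
    (tau1k k (n₁ * n₂) : ℤ) = divisorConv (ofPrimePowers (localCoeff k))
      (fun m₁ m₂ => (tau1k k m₁ * tau1k k m₂ : ℤ)) n₁ n₂ := by
  set τ : ArithmeticFunction ℤ := ↑(ζ * powIndicator k)
  have hτ : ∀ n, (tau1k k n : ℤ) = τ n := fun n => by
    simp [τ, tau1k_eq_zeta_mul_powIndicator hk.ne']
  have hτmul : τ.IsMultiplicative :=
    (isMultiplicative_zeta.mul (isMultiplicative_powIndicator k)).natCast
  simpa only [hτ] using hτmul.isMultiplicative₂_comp_mul.eq_of_prime_pow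
    ((isMultiplicative₂_ofPrimePowers _).divisorConv hτmul.isMultiplicative₂_mul)
    (fun p a b hp => by simpa only [hτ] using tau1k_prime_pow_mul_eq_divisorConv hk hp a b)
    hn₁ hn₂

section Tsum

variable {M : Type*} [AddCommMonoid M] [TopologicalSpace M]

lemma tsum_pnat_ite_dvd (n : ℕ+) (φ : ℕ → M) :
    ∑' d : ℕ+, (if (d : ℕ) ∣ n then φ d else 0) = ∑ d ∈ (n : ℕ).divisors, φ d := by
  rw [tsum_eq_sum (s := (n : ℕ).divisors.preimage PNat.val PNat.coe_injective.injOn)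
      fun d hd => if_neg fun h => hd (mem_preimage.2 (Nat.mem_divisors.2 ⟨h, n.ne_zero⟩)),
    sum_preimage PNat.val _ _ (fun d => if d ∣ n then φ d else 0)
      fun d hd hd' => absurd ⟨⟨d, Nat.pos_of_mem_divisors hd⟩, rfl⟩ hd']
  exact sum_congr rfl fun d hd => if_pos (Nat.dvd_of_mem_divisors hd)

lemma tsum_tsum_pnat_ite_dvd (n₁ n₂ : ℕ+) (φ : ℕ → ℕ → M) :
    ∑' (d₁ : ℕ+) (d₂ : ℕ+), (if (d₁ : ℕ) ∣ n₁ ∧ (d₂ : ℕ) ∣ n₂ then φ d₁ d₂ else 0)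
      = ∑ d₁ ∈ (n₁ : ℕ).divisors, ∑ d₂ ∈ (n₂ : ℕ).divisors, φ d₁ d₂ := by
  rw [← tsum_pnat_ite_dvd n₁]
  refine tsum_congr fun d₁ => ?_
  split_ifs with h
  · simp only [h, true_and]
    exact tsum_pnat_ite_dvd n₂ _
  · simp [h]

end Tsum

end BuscheRamanujan

open BuscheRamanujan in
theorem stmt2 (k : ℕ) (hk : 1 ≤ k) :
    ∃ f : ℕ+ × ℕ+ → ℤ,
      -- (i) multiplicativity
      (∀ m₁ m₂ n₁ n₂ : ℕ+,
        Nat.Coprime ((m₁ : ℕ) * (m₂ : ℕ)) ((n₁ : ℕ) * (n₂ : ℕ)) →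
        f (m₁ * n₁, m₂ * n₂) = f (m₁, m₂) * f (n₁, n₂)) ∧
      -- (ii) values at prime powers
      (∀ p : ℕ+, (p : ℕ).Prime → ∀ ν₁ ν₂ : ℕ,
        f (p ^ ν₁, p ^ ν₂) =
          if ν₁ = 0 ∧ ν₂ = 0 then 1
          else if 1 ≤ ν₁ ∧ 1 ≤ ν₂ ∧ ν₁ + ν₂ = k then 1
          else if 1 ≤ ν₁ ∧ 1 ≤ ν₂ ∧ ν₁ + ν₂ = k + 1 then -1
          else 0) ∧
      -- (iii) the generalized Busche–Ramanujan identity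
      (∀ n₁ n₂ : ℕ+,
        (tau1k k ((n₁ : ℕ) * (n₂ : ℕ)) : ℤ) =
          ∑' (d₁ : ℕ+) (d₂ : ℕ+),
            if (d₁ : ℕ) ∣ (n₁ : ℕ) ∧ (d₂ : ℕ) ∣ (n₂ : ℕ) then
              f (d₁, d₂) * (tau1k k ((n₁ : ℕ) / (d₁ : ℕ)) : ℤ) *
                (tau1k k ((n₂ : ℕ) / (d₂ : ℕ)) : ℤ)
            else 0) := by
  refine ⟨fun d => ofPrimePowers (localCoeff k) d.1 d.2, fun m₁ m₂ n₁ n₂ h => ?_,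
    fun p hp ν₁ ν₂ => ?_, fun n₁ n₂ => ?_⟩
  · simpa only [PNat.mul_coe] using (isMultiplicative₂_ofPrimePowers (localCoeff k)).2 h
  · simp only [PNat.pow_coe]
    exact ofPrimePowers_prime_pow (localCoeff_zero_zero k) hp ν₁ ν₂
  · rw [tsum_tsum_pnat_ite_dvd n₁ n₂ fun d₁ d₂ => ofPrimePowers (localCoeff k) d₁ d₂ *
        (tau1k k (n₁ / d₁) : ℤ) * (tau1k k (n₂ / d₂) : ℤ),
      tau1k_mul_eq_divisorConv hk n₁.ne_zero n₂.ne_zero]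
    simp only [divisorConv, mul_assoc]
end

section
/- Let r ≥ 2 and k ≥ 1 be fixed integers with rk > 2. Then Σ_{n₁,…,n_r ≤ x} τ_{1,k}(gcd(n₁,…,n_r)) = ζ(kr)·x^r + O(x^{r−1}) as x → ∞. -/
/-! Writing `τ_{1,k}(m) = #{b | b ^ k ∣ m}` and swapping the order of summation, the sum over the
box `[1, N]ʳ` becomes `∑_{b ≤ N} ⌊N / bᵏ⌋ʳ`, since `bᵏ` divides the gcd iff it divides every
coordinate. For `N = ⌊x⌋` this is `∑_b ⌊x / bᵏ⌋ʳ`, which differs from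
`∑_b (x / bᵏ)ʳ = ζ(kr) xʳ` termwise by at most `r (x / bᵏ)ʳ⁻¹`; summing these errors over all `b`
gives `r ζ(k(r-1)) xʳ⁻¹`, finite because `k(r-1) ≥ 2` when `rk > 2`. -/

open scoped BigOperators
open Filter Asymptotics

open Finset

lemma tau1k_eq_card_filter_Icc {k m N : ℕ} (hk : k ≠ 0) (hm : m ≠ 0) (hmN : m ≤ N) :
    tau1k k m = #{b ∈ Icc 1 N | b ^ k ∣ m} := by
  unfold tau1k
  congr 1
  ext b
  simp only [mem_filter, Nat.mem_divisors, mem_Icc]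
  constructor
  · rintro ⟨⟨hb, -⟩, hbk⟩
    exact ⟨⟨Nat.pos_of_dvd_of_pos hb (Nat.pos_of_ne_zero hm),
      (Nat.le_of_dvd (Nat.pos_of_ne_zero hm) hb).trans hmN⟩, hbk⟩
  · rintro ⟨-, hbk⟩
    exact ⟨⟨(dvd_pow_self b hk).trans hbk, hm⟩, hbk⟩

lemma card_filter_dvd_gcd_piFinset_Icc (r N d : ℕ) :
    #{n ∈ Fintype.piFinset fun _ : Fin r => Icc 1 N | d ∣ univ.gcd n} = (N / d) ^ r := by
  have hbox : {n ∈ Fintype.piFinset fun _ : Fin r => Icc 1 N | d ∣ univ.gcd n}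
      = Fintype.piFinset fun _ => {m ∈ Icc 1 N | d ∣ m} := by
    ext n
    simp [Finset.dvd_gcd_iff, Fintype.mem_piFinset, forall_and]
  rw [hbox, Fintype.card_piFinset, prod_const, card_univ, Fintype.card_fin,
    ← Nat.Ioc_filter_dvd_card_eq_div]
  rfl

lemma sum_tau1k_gcd_piFinset_Icc {r k : ℕ} (hr : r ≠ 0) (hk : k ≠ 0) (N : ℕ) :
    ∑ n ∈ Fintype.piFinset (fun _ : Fin r => Icc 1 N), tau1k k (univ.gcd n)
      = ∑ b ∈ Icc 1 N, (N / b ^ k) ^ r := by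
  calc _ = ∑ n ∈ Fintype.piFinset (fun _ : Fin r => Icc 1 N),
        #{b ∈ Icc 1 N | b ^ k ∣ univ.gcd n} := by
        refine sum_congr rfl fun n hn => ?_
        let i : Fin r := ⟨0, Nat.pos_of_ne_zero hr⟩
        have hn0 : n i ∈ Icc 1 N := Fintype.mem_piFinset.1 hn i
        have hdvd : univ.gcd n ∣ n i := gcd_dvd (mem_univ i)
        rw [mem_Icc] at hn0
        exact tau1k_eq_card_filter_Icc hk (ne_zero_of_dvd_ne_zero (by omega) hdvd)
          ((Nat.le_of_dvd (by omega) hdvd).trans hn0.2)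
    _ = ∑ b ∈ Icc 1 N, #{n ∈ Fintype.piFinset (fun _ : Fin r => Icc 1 N) | b ^ k ∣ univ.gcd n} := by
        simp only [card_filter]
        exact sum_comm
    _ = _ := sum_congr rfl fun b _ => card_filter_dvd_gcd_piFinset_Icc r N (b ^ k)

lemma pow_sub_floor_pow_le {a : ℝ} (ha : 0 ≤ a) (m : ℕ) :
    a ^ m - (⌊a⌋₊ : ℝ) ^ m ≤ m * a ^ (m - 1) := by
  have hfl : (⌊a⌋₊ : ℝ) ≤ a := Nat.floor_le ha
  have hfrac : |a - ⌊a⌋₊| ≤ 1 := by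
    rw [abs_of_nonneg (sub_nonneg.2 hfl)]
    linarith [Nat.lt_floor_add_one a]
  calc a ^ m - (⌊a⌋₊ : ℝ) ^ m
      ≤ |a - ⌊a⌋₊| * m * max |a| |(⌊a⌋₊ : ℝ)| ^ (m - 1) :=
        (le_abs_self _).trans (abs_pow_sub_pow_le ..)
    _ ≤ 1 * m * a ^ (m - 1) := by
        rw [abs_of_nonneg ha, Nat.abs_cast, max_eq_left hfl]
        gcongr
    _ = m * a ^ (m - 1) := by rw [one_mul]

lemma sum_Icc_floor_div_pow_eq_tsum {k r : ℕ} (hk : k ≠ 0) (hr : r ≠ 0) (x : ℝ) :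
    ∑ b ∈ Icc 1 ⌊x⌋₊, (⌊x / (b : ℝ) ^ k⌋₊ : ℝ) ^ r
      = ∑' b : ℕ, (⌊x / (b : ℝ) ^ k⌋₊ : ℝ) ^ r := by
  refine (tsum_eq_sum fun b hbN => ?_).symm
  suffices ⌊x / (b : ℝ) ^ k⌋₊ = 0 by simp [this, hr]
  rcases Nat.eq_zero_or_pos b with rfl | hb
  · simp [hk]
  · have hxb : x < b := (Nat.floor_lt' hb.ne').1 (by rw [mem_Icc] at hbN; omega)
    have hbk : (b : ℝ) ≤ (b : ℝ) ^ k := le_self_pow₀ (by exact_mod_cast hb) hk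
    rw [Nat.floor_eq_zero, div_lt_one (by positivity)]
    linarith

lemma riemannZeta_natCast_re {m : ℕ} (hm : 1 < m) :
    (riemannZeta m).re = ∑' b : ℕ, 1 / (b : ℝ) ^ m := by
  have hcast : ((∑' b : ℕ, 1 / (b : ℝ) ^ m : ℝ) : ℂ) = ∑' b : ℕ, 1 / (b : ℂ) ^ m := by
    rw [Complex.ofReal_tsum]
    push_cast
    rfl
  rw [zeta_nat_eq_tsum_of_gt_one hm, ← hcast, Complex.ofReal_re]

lemma abs_tsum_floor_div_pow_sub_le {k r : ℕ} (hkr : 1 < k * (r - 1)) {x : ℝ} (hx : 0 ≤ x) :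
    |∑' b : ℕ, (⌊x / (b : ℝ) ^ k⌋₊ : ℝ) ^ r - (∑' b : ℕ, 1 / (b : ℝ) ^ (k * r)) * x ^ r|
      ≤ r * (∑' b : ℕ, 1 / (b : ℝ) ^ (k * (r - 1))) * x ^ (r - 1) := by
  set f : ℕ → ℝ := fun b => (x / (b : ℝ) ^ k) ^ r
  set g : ℕ → ℝ := fun b => (⌊x / (b : ℝ) ^ k⌋₊ : ℝ) ^ r
  set e : ℕ → ℝ := fun b => 1 / (b : ℝ) ^ (k * (r - 1))
  have he : Summable e := Real.summable_one_div_nat_pow.2 hkr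
  have hf_eq : f = fun b : ℕ => x ^ r * (1 / (b : ℝ) ^ (k * r)) := by
    ext b
    simp only [f, div_pow, ← pow_mul, mul_one_div]
  have hkr' : 1 < k * r := hkr.trans_le (Nat.mul_le_mul_left k (Nat.sub_le r 1))
  have hf : Summable f := hf_eq ▸ (Real.summable_one_div_nat_pow.2 hkr').mul_left _
  have hgf : ∀ b, g b ≤ f b := fun b =>
    pow_le_pow_left₀ (Nat.cast_nonneg _) (Nat.floor_le (by positivity)) r
  have hfg : ∀ b, f b - g b ≤ r * x ^ (r - 1) * e b := fun b => by
    calc f b - g b ≤ r * (x / (b : ℝ) ^ k) ^ (r - 1) := pow_sub_floor_pow_le (by positivity) r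
      _ = r * x ^ (r - 1) * e b := by simp only [e, div_pow, ← pow_mul]; ring
  have hg : Summable g := hf.of_nonneg_of_le (fun b => by positivity) hgf
  have hdiff : ∑' b, f b - ∑' b, g b = ∑' b, (f b - g b) := (hf.tsum_sub hg).symm
  have htotal : ∑' b, f b = (∑' b : ℕ, 1 / (b : ℝ) ^ (k * r)) * x ^ r := by
    rw [hf_eq, tsum_mul_left, mul_comm]
  rw [← htotal, abs_sub_comm, abs_of_nonneg (hdiff ▸ tsum_nonneg fun b => sub_nonneg.2 (hgf b)),
    hdiff, mul_right_comm, ← tsum_mul_left]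
  exact (hf.sub hg).tsum_le_tsum hfg (he.mul_left _)

theorem stmt16_general (r k : ℕ) (hr : 2 ≤ r) (hrk : 2 < r * k) :
    (fun x : ℝ =>
        (∑ n ∈ Fintype.piFinset fun _ : Fin r => Finset.Icc 1 ⌊x⌋₊,
          (tau1k k (Finset.univ.gcd n) : ℝ)) -
        (riemannZeta ((k : ℂ) * (r : ℂ))).re * x ^ (r : ℝ))
      =O[atTop] fun x : ℝ => x ^ ((r : ℝ) - 1) := by
  have hk : k ≠ 0 := by rintro rfl; simp at hrk
  have hkr : 1 < k * (r - 1) := by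
    obtain ⟨s, rfl⟩ : ∃ s, r = s + 2 := ⟨r - 2, by omega⟩
    rw [Nat.add_sub_assoc (by norm_num)]
    nlinarith
  have hzeta : (riemannZeta ((k : ℂ) * (r : ℂ))).re = ∑' b : ℕ, 1 / (b : ℝ) ^ (k * r) := by
    rw [← riemannZeta_natCast_re (hkr.trans_le (Nat.mul_le_mul_left k (Nat.sub_le r 1)))]
    push_cast
    rfl
  refine IsBigO.of_bound (r * ∑' b : ℕ, 1 / (b : ℝ) ^ (k * (r - 1))) ?_
  filter_upwards [eventually_ge_atTop 0] with x hx
  have hcount : ∑ n ∈ Fintype.piFinset (fun _ : Fin r => Icc 1 ⌊x⌋₊), (tau1k k (univ.gcd n) : ℝ)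
      = ∑' b : ℕ, (⌊x / (b : ℝ) ^ k⌋₊ : ℝ) ^ r := by
    rw [← sum_Icc_floor_div_pow_eq_tsum hk (by omega), ← Nat.cast_sum,
      sum_tau1k_gcd_piFinset_Icc (by omega) hk]
    push_cast
    refine sum_congr rfl fun b _ => ?_
    rw [← Nat.floor_div_natCast]
    push_cast
    rfl
  rw [hcount, hzeta, Real.norm_eq_abs, Real.norm_of_nonneg (by positivity), Real.rpow_natCast,
    ← Nat.cast_pred (by omega), Real.rpow_natCast]
  exact abs_tsum_floor_div_pow_sub_le hkr hx

theorem stmt16 (r k : ℕ) (hr : 2 ≤ r) (hk : 1 ≤ k) (hrk : 2 < r * k) :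
    (fun x : ℝ =>
        (∑ n ∈ Fintype.piFinset fun _ : Fin r => Finset.Icc 1 ⌊x⌋₊,
          (tau1k k (Finset.univ.gcd n) : ℝ)) -
        (riemannZeta ((k : ℂ) * (r : ℂ))).re * x ^ (r : ℝ))
      =O[atTop] fun x : ℝ => x ^ ((r : ℝ) - 1) :=
  stmt16_general r k hr hrk
end

section
/- One has Σ_{n₁,n₂ ≤ x} τ(gcd(n₁,n₂)) = ζ(2)·x² + O(x·log x) as x → ∞. -/
open scoped BigOperators
open Filter Asymptotics

/-- `tau n` = τ(n), the number of divisors of `n`. -/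
def tau (n : ℕ) : ℕ := n.divisors.card

/-!
Since τ(gcd(n₁, n₂)) counts the common divisors d of n₁ and n₂, interchanging the order of
summation gives Σ_{n₁,n₂ ≤ N} τ(gcd(n₁, n₂)) = Σ_{d ≤ N} ⌊N/d⌋². Replacing ⌊N/d⌋² by (N/d)² costs
at most 2N/d per term, hence O(N log N) in total, and N² Σ_{d ≤ N} d⁻² = ζ(2) N² + O(N) because
the tail Σ_{d > N} d⁻² is at most 1/N.
-/

open Finset Real Topology

lemma Nat.Icc_one_eq_Ioc_zero (N : ℕ) : Icc 1 N = Ioc 0 N :=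
  Finset.Icc_add_one_left_eq_Ioc 0 N

lemma tau_gcd_eq_card_filter {N a : ℕ} (ha : a ∈ Icc 1 N) {b : ℕ} (hb : b ≠ 0) :
    tau (a.gcd b) = #{d ∈ Icc 1 N | d ∣ a ∧ d ∣ b} := by
  rw [mem_Icc] at ha
  unfold tau
  congr 1
  ext d
  simp only [Nat.mem_divisors, mem_filter, mem_Icc, Nat.dvd_gcd_iff]
  constructor
  · rintro ⟨⟨hda, hdb⟩, -⟩
    exact ⟨⟨Nat.pos_of_dvd_of_pos hda ha.1, (Nat.le_of_dvd ha.1 hda).trans ha.2⟩, hda, hdb⟩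
  · rintro ⟨-, hda, hdb⟩
    exact ⟨⟨hda, hdb⟩, Nat.gcd_ne_zero_right hb⟩

lemma sum_sum_tau_gcd (N M : ℕ) :
    ∑ a ∈ Icc 1 N, ∑ b ∈ Icc 1 M, tau (a.gcd b) = ∑ d ∈ Icc 1 N, (N / d) * (M / d) := by
  have hcount (K d : ℕ) : ∑ a ∈ Icc 1 K, (if d ∣ a then 1 else 0) = K / d := by
    rw [← card_filter, Nat.Icc_one_eq_Ioc_zero, Nat.Ioc_filter_dvd_card_eq_div]
  calc ∑ a ∈ Icc 1 N, ∑ b ∈ Icc 1 M, tau (a.gcd b)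
      = ∑ a ∈ Icc 1 N, ∑ b ∈ Icc 1 M, ∑ d ∈ Icc 1 N,
          (if d ∣ a then 1 else 0) * (if d ∣ b then 1 else 0) := by
        refine sum_congr rfl fun a ha => sum_congr rfl fun b hb => ?_
        rw [tau_gcd_eq_card_filter ha (by simp at hb; omega), card_filter]
        simp only [ite_zero_mul_ite_zero, mul_one]
    _ = ∑ d ∈ Icc 1 N, (N / d) * (M / d) := by
        simp only [← hcount, sum_mul_sum]
        exact (sum_congr rfl fun _ _ => sum_comm).trans sum_comm

section Floor

variable {K : Type*} [Field K] [LinearOrder K] [IsStrictOrderedRing K] [FloorSemiring K]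

lemma natFloor_sq_le_sq {y : K} (hy : 0 ≤ y) : (⌊y⌋₊ : K) ^ 2 ≤ y ^ 2 := by
  have := Nat.floor_le hy
  gcongr

lemma sq_le_natFloor_sq_add {y : K} (hy : 0 ≤ y) : y ^ 2 ≤ (⌊y⌋₊ : K) ^ 2 + 2 * y := by
  nlinarith [Nat.floor_le hy, Nat.lt_floor_add_one y, Nat.cast_nonneg (α := K) ⌊y⌋₊]

lemma natCast_div_sq_le (N d : ℕ) :
    ((N / d : ℕ) : K) ^ 2 ≤ (N : K) ^ 2 * ((d : K) ^ 2)⁻¹ := by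
  rw [← Nat.floor_div_eq_div (K := K), ← div_eq_mul_inv, ← div_pow]
  exact natFloor_sq_le_sq (by positivity)

lemma sq_mul_inv_sq_le (N d : ℕ) :
    (N : K) ^ 2 * ((d : K) ^ 2)⁻¹ ≤ ((N / d : ℕ) : K) ^ 2 + 2 * N * (d : K)⁻¹ := by
  rw [← Nat.floor_div_eq_div (K := K), mul_assoc, ← div_eq_mul_inv, ← div_eq_mul_inv, ← div_pow]
  exact sq_le_natFloor_sq_add (by positivity)

end Floor

lemma tendsto_sum_Icc_inv_sq :
    Tendsto (fun n : ℕ => ∑ d ∈ Icc 1 n, ((d : ℝ) ^ 2)⁻¹) atTop (𝓝 (π ^ 2 / 6)) := by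
  refine (hasSum_zeta_two.tendsto_sum_nat.comp (tendsto_add_atTop_nat 1)).congr fun n => ?_
  rw [Function.comp_apply, range_eq_Ico, sum_eq_sum_Ico_succ_bot n.succ_pos, Nat.succ_eq_add_one,
    Ico_add_one_right_eq_Icc]
  simp

lemma sum_Icc_inv_sq_le (N : ℕ) : ∑ d ∈ Icc 1 N, ((d : ℝ) ^ 2)⁻¹ ≤ π ^ 2 / 6 :=
  sum_le_hasSum _ (fun _ _ => by positivity) (by simpa only [one_div] using hasSum_zeta_two)

lemma pi_sq_div_six_le_sum_Icc_inv_sq_add {N : ℕ} (hN : N ≠ 0) :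
    π ^ 2 / 6 ≤ ∑ d ∈ Icc 1 N, ((d : ℝ) ^ 2)⁻¹ + (N : ℝ)⁻¹ := by
  refine le_of_tendsto tendsto_sum_Icc_inv_sq ?_
  filter_upwards [eventually_ge_atTop N] with n hn
  rw [Nat.Icc_one_eq_Ioc_zero, Nat.Icc_one_eq_Ioc_zero,
    ← sum_Ioc_consecutive _ (Nat.zero_le N) hn]
  have : (0 : ℝ) ≤ (n : ℝ)⁻¹ := by positivity
  linarith [sum_Ioc_inv_sq_le_sub (α := ℝ) hN hn]

lemma abs_sum_div_sq_sub_le (N : ℕ) :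
    |∑ d ∈ Icc 1 N, ((N / d : ℕ) : ℝ) ^ 2 - π ^ 2 / 6 * N ^ 2| ≤ N * (3 + 2 * log N) := by
  rcases Nat.eq_zero_or_pos N with rfl | hN
  · simp
  set S := ∑ d ∈ Icc 1 N, ((N / d : ℕ) : ℝ) ^ 2
  set Z := ∑ d ∈ Icc 1 N, ((d : ℝ) ^ 2)⁻¹
  have hSZ : S ≤ N ^ 2 * Z := by
    rw [mul_sum]
    exact sum_le_sum fun d _ => natCast_div_sq_le N d
  have hZS : N ^ 2 * Z ≤ S + 2 * N * harmonic N := by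
    rw [mul_sum, harmonic_eq_sum_Icc]
    push_cast
    rw [mul_sum, ← sum_add_distrib]
    exact sum_le_sum fun d _ => sq_mul_inv_sq_le N d
  have hZ := sum_Icc_inv_sq_le N
  have hZ' := pi_sq_div_six_le_sum_Icc_inv_sq_add hN.ne'
  have hH : (harmonic N : ℝ) ≤ 1 + log N := harmonic_le_one_add_log N
  have hN' : (0 : ℝ) < N := by exact_mod_cast hN
  have hNinv : (N : ℝ) ^ 2 * (N : ℝ)⁻¹ = N := by field_simp
  rw [abs_le]
  constructor <;> nlinarith

lemma abs_sum_floor_div_sq_sub_le {x : ℝ} (hx : exp 1 ≤ x) :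
    |∑ d ∈ Icc 1 ⌊x⌋₊, ((⌊x⌋₊ / d : ℕ) : ℝ) ^ 2 - π ^ 2 / 6 * x ^ 2| ≤ 9 * (x * log x) := by
  set N := ⌊x⌋₊
  have hx1 : 1 ≤ x := (one_le_exp zero_le_one).trans hx
  have hlog : 1 ≤ log x := (le_log_iff_exp_le (by linarith)).mpr hx
  have hNx : (N : ℝ) ≤ x := Nat.floor_le (by linarith)
  have hxN : x < N + 1 := Nat.lt_floor_add_one x
  have hlogN : log N ≤ log x := log_le_log (by exact_mod_cast Nat.floor_pos.mpr hx1) hNx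
  have hpi : π ^ 2 / 6 ≤ 2 := by nlinarith [pi_lt_d2, pi_pos]
  have hshift : |π ^ 2 / 6 * N ^ 2 - π ^ 2 / 6 * x ^ 2| ≤ 4 * x := by
    have hgap : 0 ≤ x ^ 2 - N ^ 2 := by nlinarith [Nat.cast_nonneg (α := ℝ) N]
    rw [abs_sub_comm, ← mul_sub, abs_of_nonneg (mul_nonneg (by positivity) hgap)]
    nlinarith [mul_le_mul_of_nonneg_right hpi hgap]
  calc _ ≤ |∑ d ∈ Icc 1 N, ((N / d : ℕ) : ℝ) ^ 2 - π ^ 2 / 6 * N ^ 2|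
        + |π ^ 2 / 6 * N ^ 2 - π ^ 2 / 6 * x ^ 2| := abs_sub_le _ _ _
    _ ≤ N * (3 + 2 * log N) + 4 * x := add_le_add (abs_sum_div_sq_sub_le N) hshift
    _ ≤ 9 * (x * log x) := by nlinarith

theorem stmt17 :
    (fun x : ℝ =>
        (∑ n₁ ∈ Finset.Icc 1 ⌊x⌋₊, ∑ n₂ ∈ Finset.Icc 1 ⌊x⌋₊,
          (tau (Nat.gcd n₁ n₂) : ℝ)) -
        (riemannZeta 2).re * x ^ 2)
      =O[atTop] fun x : ℝ => x * Real.log x := by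
  have hzeta : (riemannZeta 2).re = π ^ 2 / 6 := by
    rw [riemannZeta_two]
    norm_cast
  refine IsBigO.of_bound 9 ?_
  filter_upwards [eventually_ge_atTop (exp 1)] with x hx
  have hsum : ∑ n₁ ∈ Icc 1 ⌊x⌋₊, ∑ n₂ ∈ Icc 1 ⌊x⌋₊, (tau (n₁.gcd n₂) : ℝ)
      = ∑ d ∈ Icc 1 ⌊x⌋₊, ((⌊x⌋₊ / d : ℕ) : ℝ) ^ 2 := by
    simp_rw [sq]
    exact_mod_cast sum_sum_tau_gcd _ _
  have hxlog : 0 ≤ x * log x :=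
    mul_nonneg ((exp_pos 1).le.trans hx) (log_nonneg ((one_le_exp zero_le_one).trans hx))
  rw [norm_of_nonneg hxlog, norm_eq_abs, hsum, hzeta]
  exact abs_sum_floor_div_sq_sub_le hx
end

section
/- Let r ≥ 2 be a fixed integer and let f : ℕ₊ → ℂ be an arbitrary arithmetic function. Then for every real x ≥ 1, Σ_{n₁,…,n_r ≤ x} f(gcd(n₁,…,n_r)) = Σ_{d ≤ x} (μ * f)(d) · ⌊x/d⌋^r, where μ * f denotes the Dirichlet convolution of the Möbius function μ with f. -/
/-!
Write `f = 1 * (μ * f)` by Möbius inversion, so that `f (gcd n) = ∑_{d ∣ gcd n} (μ * f)(d)`.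
Exchanging the sums, `d ∣ gcd n` means that `d` divides every coordinate, and there are
`⌊N / d⌋` multiples of `d` in `[1, N]` for each of the `r` coordinates.
-/

open Finset ArithmeticFunction
open scoped ArithmeticFunction.Moebius

theorem sum_divisors_sum_moebius_mul {R : Type*} [Ring R] (F : ℕ → R) {m : ℕ} (hm : 0 < m) :
    ∑ d ∈ m.divisors, ∑ e ∈ d.divisors, (μ e : R) * F (d / e) = F m := by
  refine (sum_eq_iff_sum_smul_moebius_eq (f := fun d => ∑ e ∈ d.divisors, (μ e : R) * F (d / e))
    (g := F)).2 (fun n _ => ?_) m hm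
  rw [← Nat.sum_divisorsAntidiagonal (fun a b => (μ a : R) * F b)]
  exact sum_congr rfl fun _ _ => zsmul_eq_mul _ _

theorem Nat.filter_dvd_Icc_eq_divisors {m N : ℕ} (hm : 0 < m) (hmN : m ≤ N) :
    {d ∈ Icc 1 N | d ∣ m} = m.divisors := by
  ext d
  simp only [mem_filter, mem_Icc, Nat.mem_divisors]
  constructor
  · rintro ⟨-, hdm⟩
    exact ⟨hdm, hm.ne'⟩
  · rintro ⟨hdm, -⟩
    exact ⟨⟨Nat.pos_of_dvd_of_pos hdm hm, (Nat.le_of_dvd hm hdm).trans hmN⟩, hdm⟩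

theorem Nat.card_filter_dvd_Icc (N d : ℕ) : #{m ∈ Icc 1 N | d ∣ m} = N / d := by
  rw [← Nat.Ioc_filter_dvd_card_eq_div, ← Finset.Icc_add_one_left_eq_Ioc, zero_add]

section Tuples

variable {ι : Type*} [Fintype ι] [DecidableEq ι]

theorem gcd_mem_Icc_of_mem_piFinset [Nonempty ι] {N : ℕ} {n : ι → ℕ}
    (hn : n ∈ Fintype.piFinset fun _ => Icc 1 N) : univ.gcd n ∈ Icc 1 N := by
  rw [Fintype.mem_piFinset] at hn
  obtain ⟨i⟩ := ‹Nonempty ι›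
  have hi := mem_Icc.1 (hn i)
  have hdvd : univ.gcd n ∣ n i := gcd_dvd (mem_univ i)
  have hpos : 0 < univ.gcd n := Nat.pos_of_dvd_of_pos hdvd (by omega)
  exact mem_Icc.2 ⟨hpos, (Nat.le_of_dvd (by omega) hdvd).trans hi.2⟩

theorem card_filter_dvd_gcd_piFinset (N d : ℕ) :
    #{n ∈ Fintype.piFinset (fun _ : ι => Icc 1 N) | d ∣ univ.gcd n} = (N / d) ^ Fintype.card ι := by
  have hfilter : {n ∈ Fintype.piFinset (fun _ : ι => Icc 1 N) | d ∣ univ.gcd n} =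
      Fintype.piFinset fun _ => {m ∈ Icc 1 N | d ∣ m} := by
    ext n
    simp only [mem_filter, Fintype.mem_piFinset, Finset.dvd_gcd_iff, mem_univ, true_implies,
      forall_and]
  rw [hfilter, Fintype.card_piFinset, prod_const, Nat.card_filter_dvd_Icc, card_univ]

theorem sum_piFinset_Icc_gcd [Nonempty ι] {R : Type*} [CommRing R] (F : ℕ → R) (N : ℕ) :
    ∑ n ∈ Fintype.piFinset (fun _ : ι => Icc 1 N), F (univ.gcd n) =
      ∑ d ∈ Icc 1 N, (∑ e ∈ d.divisors, (μ e : R) * F (d / e)) *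
        ((N / d : ℕ) : R) ^ Fintype.card ι := by
  set g : ℕ → R := fun d => ∑ e ∈ d.divisors, (μ e : R) * F (d / e)
  calc ∑ n ∈ Fintype.piFinset (fun _ : ι => Icc 1 N), F (univ.gcd n)
      = ∑ n ∈ Fintype.piFinset (fun _ : ι => Icc 1 N), ∑ d ∈ Icc 1 N,
          if d ∣ univ.gcd n then g d else 0 := by
        refine sum_congr rfl fun n hn => ?_
        obtain ⟨hpos, hle⟩ := mem_Icc.1 (gcd_mem_Icc_of_mem_piFinset hn)
        rw [← sum_filter, Nat.filter_dvd_Icc_eq_divisors hpos hle,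
          sum_divisors_sum_moebius_mul F hpos]
    _ = ∑ d ∈ Icc 1 N, ∑ n ∈ Fintype.piFinset (fun _ : ι => Icc 1 N),
          if d ∣ univ.gcd n then g d else 0 := sum_comm
    _ = ∑ d ∈ Icc 1 N, g d * ((N / d : ℕ) : R) ^ Fintype.card ι := by
        refine sum_congr rfl fun d _ => ?_
        rw [← sum_filter, sum_const, card_filter_dvd_gcd_piFinset, nsmul_eq_mul, mul_comm,
          Nat.cast_pow]

end Tuples

theorem stmt18_general (r : ℕ) (hr : 2 ≤ r) (f : ℕ+ → ℂ) (x : ℝ) :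
    ∑ n ∈ Fintype.piFinset fun _ : Fin r => Finset.Icc 1 ⌊x⌋₊,
        f (Finset.univ.gcd n).toPNat' =
      ∑ d ∈ Finset.Icc 1 ⌊x⌋₊,
        (∑ e ∈ d.divisors, (ArithmeticFunction.moebius e : ℂ) * f (d / e).toPNat') *
          (⌊x / (d : ℝ)⌋₊ : ℂ) ^ r := by
  have : Nonempty (Fin r) := ⟨⟨0, by omega⟩⟩
  simp only [Nat.floor_div_natCast]
  simpa using sum_piFinset_Icc_gcd (ι := Fin r) (fun m => f m.toPNat') ⌊x⌋₊

theorem stmt18 (r : ℕ) (hr : 2 ≤ r) (f : ℕ+ → ℂ) (x : ℝ) (hx : 1 ≤ x) :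
    ∑ n ∈ Fintype.piFinset fun _ : Fin r => Finset.Icc 1 ⌊x⌋₊,
        f (Finset.univ.gcd n).toPNat' =
      ∑ d ∈ Finset.Icc 1 ⌊x⌋₊,
        (∑ e ∈ d.divisors, (ArithmeticFunction.moebius e : ℂ) * f (d / e).toPNat') *
          (⌊x / (d : ℝ)⌋₊ : ℂ) ^ r :=
  stmt18_general r hr f x
end

section
/- Let k ≥ 2 be a fixed integer. Then ∏_p (1−1/p)² · Σ_{ν₁,ν₂ ≥ 0} (⌊(ν₁+ν₂)/k⌋+1)·p^{−(ν₁+ν₂)} = ζ(k)² · ∏_p (1 + (k−1)/p^k − k/p^{k+1}), where both products are taken over all primes p and converge. -/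
/-!
Write `x = 1/p`. Since `⌊n/k⌋ + 1` counts the pairs `(i, j)` with `i + k j = n` and `n + 1` the
pairs `(ν₁, ν₂)` with `ν₁ + ν₂ = n`, the local series equals `∑_{i,j} (i + k j + 1) x^{i + k j}`,
a combination of products of geometric series, with sum
`(1 + (k-1) x^k - k x^{k+1}) / ((1-x)² (1-x^k)²)`. So the `p`-th factor on the left is
`(1 - p^{-k})^{-2}` times the `p`-th factor on the right, and the Euler product of `ζ(k)` concludes.
-/

open Finset

theorem hasSum_comp_iff_hasSum_card_mul {β γ : Type*} {f : γ → ℝ} (hf : 0 ≤ f) {φ : β → γ}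
    (fiber : γ → Finset β) (mem_fiber : ∀ b c, b ∈ fiber c ↔ φ b = c) {s : ℝ} :
    HasSum (f ∘ φ) s ↔ HasSum (fun c => (#(fiber c) : ℝ) * f c) s := by
  let e : (Σ c, fiber c) ≃ β :=
    (Equiv.sigmaCongrRight fun c => Equiv.subtypeEquivRight fun b => mem_fiber b c).trans
      (Equiv.sigmaFiberEquiv φ)
  have hfiber : ∀ c, HasSum (fun b : fiber c => (f ∘ φ ∘ e) ⟨c, b⟩) (#(fiber c) * f c) := by
    intro c
    have hconst : ∀ b : fiber c, f (φ b) = f c := fun b => congrArg f ((mem_fiber _ _).1 b.2)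
    simpa [e, hconst] using hasSum_fintype fun _ : fiber c => f c
  rw [← e.hasSum_iff]
  refine ⟨fun h => h.sigma hfiber, fun h => h.sigma_of_hasSum hfiber ?_⟩
  exact (summable_sigma_of_nonneg fun _ => hf _).2
    ⟨fun c => (hfiber c).summable, h.summable.congr fun c => (hfiber c).tsum_eq.symm⟩

theorem hasSum_comp_add_iff_hasSum_succ_mul {f : ℕ → ℝ} (hf : 0 ≤ f) {s : ℝ} :
    HasSum (fun ν : ℕ × ℕ => f (ν.1 + ν.2)) s ↔
      HasSum (fun n : ℕ => ((n : ℝ) + 1) * f n) s := by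
  simpa [Function.comp_def] using
    hasSum_comp_iff_hasSum_card_mul hf (φ := fun ν : ℕ × ℕ => ν.1 + ν.2) antidiagonal
      fun _ _ => mem_antidiagonal

theorem hasSum_comp_add_mul_iff_hasSum_div_succ_mul {k : ℕ} (hk : 0 < k) {f : ℕ → ℝ} (hf : 0 ≤ f)
    {s : ℝ} :
    HasSum (fun ij : ℕ × ℕ => f (ij.1 + k * ij.2)) s ↔
      HasSum (fun n => ((n / k + 1 : ℕ) : ℝ) * f n) s := by
  have mem : ∀ (ij : ℕ × ℕ) n,
      ij ∈ (range (n / k + 1)).map ⟨fun j => (n - k * j, j), fun _ _ h => congrArg Prod.snd h⟩ ↔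
        ij.1 + k * ij.2 = n := by
    rintro ⟨i, j⟩ n
    simp only [mem_map, mem_range, Nat.lt_succ_iff, Nat.le_div_iff_mul_le hk]
    constructor
    · rintro ⟨j, hj, rfl, rfl⟩
      rw [mul_comm] at hj
      omega
    · rintro rfl
      exact ⟨j, by rw [mul_comm]; omega, Prod.ext (show i + k * j - k * j = i by omega) rfl⟩
  simpa [Function.comp_def] using hasSum_comp_iff_hasSum_card_mul hf _ mem

theorem hasSum_add_mul_add_one_mul_pow {k : ℕ} (hk : 0 < k) {x : ℝ} (hx0 : 0 ≤ x)
    (hx1 : x < 1) :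
    HasSum (fun ij : ℕ × ℕ => (((ij.1 + k * ij.2 : ℕ) : ℝ) + 1) * x ^ (ij.1 + k * ij.2))
      ((1 + (k - 1) * x ^ k - k * x ^ (k + 1)) / ((1 - x) ^ 2 * (1 - x ^ k) ^ 2)) := by
  have hxk0 : 0 ≤ x ^ k := pow_nonneg hx0 k
  have hxk1 : x ^ k < 1 := pow_lt_one₀ hx0 hx1 hk.ne'
  have hgeom : HasSum (fun i : ℕ => x ^ i) (1 - x)⁻¹ := hasSum_geometric_of_lt_one hx0 hx1
  have hsucc : HasSum (fun i : ℕ => ((i : ℝ) + 1) * x ^ i) (1 / (1 - x) ^ 2) := by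
    simpa only [Nat.choose_one_right, Nat.cast_add, Nat.cast_one] using
      hasSum_choose_mul_geometric_of_norm_lt_one (𝕜 := ℝ) 1 (by rwa [Real.norm_of_nonneg hx0])
  have hgeom_k : HasSum (fun j : ℕ => (x ^ k) ^ j) (1 - x ^ k)⁻¹ :=
    hasSum_geometric_of_lt_one hxk0 hxk1
  have hmul_k : HasSum (fun j : ℕ => (k : ℝ) * (j * (x ^ k) ^ j))
      (k * (x ^ k / (1 - x ^ k) ^ 2)) :=
    (hasSum_coe_mul_geometric_of_norm_lt_one (𝕜 := ℝ)
      (by rwa [Real.norm_of_nonneg hxk0])).mul_left _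
  have h := (hsucc.mul hgeom_k (hsucc.summable.mul_of_nonneg hgeom_k.summable
      (fun i => by positivity) fun j => by positivity)).add
    (hgeom.mul hmul_k (hgeom.summable.mul_of_nonneg hmul_k.summable
      (fun i => by positivity) fun j => by positivity))
  have h1x : 1 - x ≠ 0 := by linarith
  have h1xk : 1 - x ^ k ≠ 0 := by linarith
  have hvalue : (1 + (k - 1) * x ^ k - k * x ^ (k + 1)) / ((1 - x) ^ 2 * (1 - x ^ k) ^ 2) =
      1 / (1 - x) ^ 2 * (1 - x ^ k)⁻¹ + (1 - x)⁻¹ * (k * (x ^ k / (1 - x ^ k) ^ 2)) := by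
    field_simp
    ring
  rw [hvalue]
  refine h.congr_fun fun ij => ?_
  rw [pow_add, pow_mul]
  push_cast
  ring

theorem hasSum_div_add_one_mul_pow {k : ℕ} (hk : 0 < k) {x : ℝ} (hx0 : 0 ≤ x) (hx1 : x < 1) :
    HasSum (fun ν : ℕ × ℕ => (((ν.1 + ν.2) / k + 1 : ℕ) : ℝ) * x ^ (ν.1 + ν.2))
      ((1 + (k - 1) * x ^ k - k * x ^ (k + 1)) / ((1 - x) ^ 2 * (1 - x ^ k) ^ 2)) := by
  have h := (hasSum_comp_add_mul_iff_hasSum_div_succ_mul hk (f := fun n => ((n : ℝ) + 1) * x ^ n)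
    fun n => by positivity).1 (hasSum_add_mul_add_one_mul_pow hk hx0 hx1)
  exact (hasSum_comp_add_iff_hasSum_succ_mul (f := fun n => ((n / k + 1 : ℕ) : ℝ) * x ^ n)
    fun n => by positivity).2 (h.congr_fun fun n => by ring)

theorem one_sub_sq_mul_tsum_div_add_one_mul_pow {k : ℕ} (hk : 0 < k) {x : ℝ} (hx0 : 0 ≤ x)
    (hx1 : x < 1) :
    (1 - x) ^ 2 * ∑' ν : ℕ × ℕ, (((ν.1 + ν.2) / k + 1 : ℕ) : ℝ) * x ^ (ν.1 + ν.2) =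
      (1 - x ^ k)⁻¹ * (1 - x ^ k)⁻¹ * (1 + (k - 1) * x ^ k - k * x ^ (k + 1)) := by
  have : 1 - x ≠ 0 := by linarith
  rw [(hasSum_div_add_one_mul_pow hk hx0 hx1).tsum_eq]
  field_simp

theorem riemannZeta_re_eulerProduct_hasProd {s : ℝ} (hs : 1 < s) :
    HasProd (fun p : Nat.Primes => (1 - ((p : ℕ) : ℝ) ^ (-s))⁻¹) (riemannZeta s).re := by
  have hfactor : ∀ p : Nat.Primes,
      (((1 - ((p : ℕ) : ℝ) ^ (-s))⁻¹ : ℝ) : ℂ) = (1 - ((p : ℕ) : ℂ) ^ (-(s : ℂ)))⁻¹ := by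
    intro p
    push_cast [Complex.ofReal_cpow (Nat.cast_nonneg _)]
    rfl
  have h := (riemannZeta_eulerProduct_hasProd (s := s) (by simpa using hs)).congr_fun hfactor
  rw [HasProd] at h ⊢
  simp only [← Complex.ofReal_prod] at h
  simpa only [Function.comp_def, Complex.ofReal_re] using (Complex.continuous_re.tendsto _).comp h

theorem Nat.Primes.multipliable_one_add_div_pow_sub_div_pow {k : ℕ} (hk : 1 < k) (a b : ℝ) :
    Multipliable fun p : Nat.Primes => 1 + a / ((p : ℕ) : ℝ) ^ k - b / ((p : ℕ) : ℝ) ^ (k + 1) := by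
  have hsummable : ∀ {m : ℕ}, 1 < m → Summable fun p : Nat.Primes => (((p : ℕ) : ℝ) ^ m)⁻¹ :=
    fun hm => (Real.summable_nat_pow_inv.2 hm).comp_injective Nat.Primes.coe_nat_injective
  simpa only [add_sub_assoc, div_eq_mul_inv] using Real.multipliable_one_add_of_summable
    (((hsummable hk).mul_left a).sub ((hsummable (by omega : 1 < k + 1)).mul_left b))

theorem stmt19 (k : ℕ) (hk : 2 ≤ k) :
    Multipliable (fun p : Nat.Primes =>
        (1 - 1 / ((p : ℕ) : ℝ)) ^ 2 *
          ∑' ν : ℕ × ℕ,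
            (((ν.1 + ν.2) / k + 1 : ℕ) : ℝ) / ((p : ℕ) : ℝ) ^ (ν.1 + ν.2)) ∧
    Multipliable (fun p : Nat.Primes =>
        1 + ((k : ℝ) - 1) / ((p : ℕ) : ℝ) ^ k - (k : ℝ) / ((p : ℕ) : ℝ) ^ (k + 1)) ∧
    (∏' p : Nat.Primes,
        ((1 - 1 / ((p : ℕ) : ℝ)) ^ 2 *
          ∑' ν : ℕ × ℕ,
            (((ν.1 + ν.2) / k + 1 : ℕ) : ℝ) / ((p : ℕ) : ℝ) ^ (ν.1 + ν.2))) =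
      (riemannZeta (k : ℂ)).re ^ 2 *
        ∏' p : Nat.Primes,
          (1 + ((k : ℝ) - 1) / ((p : ℕ) : ℝ) ^ k - (k : ℝ) / ((p : ℕ) : ℝ) ^ (k + 1)) := by
  set E : Nat.Primes → ℝ := fun p => (1 - 1 / ((p : ℕ) : ℝ) ^ k)⁻¹
  set G : Nat.Primes → ℝ := fun p =>
    1 + ((k : ℝ) - 1) / ((p : ℕ) : ℝ) ^ k - (k : ℝ) / ((p : ℕ) : ℝ) ^ (k + 1)
  have hE : HasProd E (riemannZeta k).re := by
    simpa [E, Real.rpow_neg, Real.rpow_natCast] using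
      riemannZeta_re_eulerProduct_hasProd (s := k) (by exact_mod_cast hk)
  have hG : Multipliable G := Nat.Primes.multipliable_one_add_div_pow_sub_div_pow (by omega) _ _
  have hlocal : ∀ p : Nat.Primes, (1 - 1 / ((p : ℕ) : ℝ)) ^ 2 *
      ∑' ν : ℕ × ℕ, (((ν.1 + ν.2) / k + 1 : ℕ) : ℝ) / ((p : ℕ) : ℝ) ^ (ν.1 + ν.2) =
        E p * E p * G p := by
    intro p
    have hp : (1 : ℝ) < (p : ℕ) := by exact_mod_cast p.2.one_lt
    have h := one_sub_sq_mul_tsum_div_add_one_mul_pow (k := k) (x := 1 / ((p : ℕ) : ℝ)) (by omega)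
      (by positivity) ((div_lt_one (by positivity)).2 hp)
    simpa only [one_div_pow, mul_one_div] using h
  have hprod := (hE.mul hE).mul hG.hasProd
  simp only [hlocal]
  exact ⟨hprod.multipliable, hG, by rw [hprod.tprod_eq]; ring⟩
end
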